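/- arXiv:math/0511621 — 5 statements merged into one kernel-verified Lean document; each statement's English description precedes it below -/
import Mathlib

section
/- (Quasi-connectivity) Let κ ∈ ℂ with κ ≠ 2, let φ be a Fricke trace map of level κ, and let K ≥ 2. Then the set 𝒞(K) = {X ∈ ℚ̂ : |φ(X)| ≤ K} is connected in the Farey graph: any two elements of 𝒞(K) are joined by a path of Farey edges all of whose vertices lie in 𝒞(K). -/
open Filter Topology

noncomputable section

namespace TWZ

/-- `ℚ̂ = ℚ ∪ {∞}`, modeling essential simple closed curves on the one-holed torus. -/
abbrev QHat := OnePoint ℚ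

/-- `ℝ̂ = ℝ ∪ {∞}`, the circle (one-point compactification of `ℝ`),
modeling the projective lamination space. -/
abbrev RHat := OnePoint ℝ

/-- Numerator of an extended rational, with `∞ = 1/0`. -/
def qnum (x : QHat) : ℤ := @Option.elim ℚ ℤ x 1 Rat.num

/-- Denominator of an extended rational, with `∞ = 1/0`. -/
def qden (x : QHat) : ℤ := @Option.elim ℚ ℤ x 0 (fun q => (q.den : ℤ))

/-- The natural inclusion `ℚ̂ → ℝ̂`. -/
def toRHat (x : QHat) : RHat := @Option.map ℚ ℝ (fun q => (q : ℝ)) x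

/-- Farey neighbors: `p/q` and `r/s` (in lowest terms) with `|ps - qr| = 1`. -/
def FareyNbr (a b : QHat) : Prop := |qnum a * qden b - qnum b * qden a| = 1

/-- A Farey triangle: three pairwise Farey neighbors. -/
def FareyTriangle (x y z : QHat) : Prop := FareyNbr x y ∧ FareyNbr y z ∧ FareyNbr x z

/-- A Fricke trace map of level `κ`: the vertex relation on Farey triangles and
the edge relation on Farey edges with their two opposite vertices. -/
def IsFricke (κ : ℂ) (φ : QHat → ℂ) : Prop :=
  (∀ x y z : QHat, FareyTriangle x y z →
    φ x ^ 2 + φ y ^ 2 + φ z ^ 2 - φ x * φ y * φ z - 2 = κ) ∧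
  (∀ x y z z' : QHat, FareyTriangle x y z → FareyTriangle x y z' → z ≠ z' →
    φ z + φ z' = φ x * φ y)

/-- `lam ∈ ℝ̂` is an end invariant of `φ` : there are `K > 0` and pairwise distinct
`X_n ∈ ℚ̂` with `X_n → lam` and `|φ (X_n)| ≤ K` for all `n`. -/
def IsEndInv (φ : QHat → ℂ) (lam : RHat) : Prop :=
  ∃ K : ℝ, 0 < K ∧ ∃ s : ℕ → QHat, Function.Injective s ∧
    Tendsto (fun n => toRHat (s n)) atTop (nhds lam) ∧
    ∀ n, ‖φ (s n)‖ ≤ K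

/-- The set `ℰ(φ) ⊆ ℝ̂` of end invariants of `φ`. -/
def endInvs (φ : QHat → ℂ) : Set RHat := {lam | IsEndInv φ lam}

/-- `φ` is dihedral: it vanishes on two of the three vertices of some Farey triangle. -/
def IsDihedral (φ : QHat → ℂ) : Prop :=
  ∃ x y z : QHat, FareyTriangle x y z ∧ φ x = 0 ∧ φ y = 0

/-- `φ` is of SU(2) type: all values are real and lie in `[-2, 2]`. -/
def IsSU2Type (φ : QHat → ℂ) : Prop :=
  ∀ x : QHat, ∃ r : ℝ, -2 ≤ r ∧ r ≤ 2 ∧ φ x = r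

/-- `φ` is real: all its values are real. -/
def IsRealMap (φ : QHat → ℂ) : Prop := ∀ x : QHat, ∃ r : ℝ, φ x = r

/-- The extended BQ-conditions on a subset `S ⊆ ℚ̂`: no value on `S` lies in the real
open interval `(-2,2)`, and only finitely many values on `S` have absolute value `≤ 2`. -/
def ExtendedBQ (φ : QHat → ℂ) (S : Set QHat) : Prop :=
  (∀ x ∈ S, ¬ ∃ r : ℝ, -2 < r ∧ r < 2 ∧ φ x = r) ∧
  {x ∈ S | ‖φ x‖ ≤ 2}.Finite

/-- A Cantor subset of `ℝ̂`: nonempty, compact, perfect and totally disconnected. -/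
def IsCantorSet (C : Set RHat) : Prop :=
  C.Nonempty ∧ IsCompact C ∧ Perfect C ∧ IsTotallyDisconnected C

/-- Parity class odd/odd. -/
def classOO : Set QHat := {x | Odd (qnum x) ∧ Odd (qden x)}

/-- Parity class even/odd. -/
def classEO : Set QHat := {x | Even (qnum x) ∧ Odd (qden x)}

/-- Parity class odd/even. -/
def classOE : Set QHat := {x | Odd (qnum x) ∧ Even (qden x)}

/-- `φ` is imaginary: not dihedral, real on one of the three parity classes and
purely imaginary on the other two. -/
def IsImaginary (φ : QHat → ℂ) : Prop :=
  ¬ IsDihedral φ ∧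
  ∃ S ∈ ({classOO, classEO, classOE} : Set (Set QHat)),
    (∀ x ∈ S, (φ x).im = 0) ∧ (∀ x ∉ S, (φ x).re = 0)

/-!
Represent `ℚ̂` by primitive vectors of `ℤ²`: Farey neighbours are then pairs of determinant `±1`
and the edge relation reads `φ(u + v) + φ(u - v) = φ(u) φ(v)`. Call a Farey edge `(P, Q)`
ascending if `|φ|` exceeds `K` at both ends and `|φ(P - Q)| < |φ(P + Q)|`. Then `P + Q` lies
outside `𝒞(K)` and the edges `(P + Q, Q)`, `(Q, P)` are again ascending, so by induction on
`a + b` every `aP + bQ` with `a, b ≥ 1` lies outside `𝒞(K)`: an ascending edge is a barrier.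

Given `u, w ∈ 𝒞(K)` with `det(u, w) = D ≥ 2`, some Farey edge `(P, P + u)` at `u` separates
them: `w = aP + b(P + u)` with `a, b ≥ 1`, `a + b = D`. If `P` or `P + u` lies in `𝒞(K)` we
recurse on the smaller determinants `b` or `a`; otherwise `|φ(P) φ(P + u)| > K² ≥ 2K` forces that
edge to be ascending, and the barrier would put `w` outside `𝒞(K)`.
-/

open OnePoint

def ofVec (v : ℤ × ℤ) : QHat := if v.2 = 0 then ∞ else ((v.1 / v.2 : ℚ) : QHat)

def rep (x : QHat) : ℤ × ℤ := (qnum x, qden x)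

@[simp] lemma rep_infty : rep ∞ = (1, 0) := rfl

@[simp] lemma rep_coe (q : ℚ) : rep q = (q.num, (q.den : ℤ)) := rfl

def det2 (u v : ℤ × ℤ) : ℤ := u.1 * v.2 - v.1 * u.2

lemma fareyNbr_iff (x y : QHat) : FareyNbr x y ↔ |det2 (rep x) (rep y)| = 1 := Iff.rfl

section det2

variable (u v : ℤ × ℤ) (k : ℤ)

@[simp] lemma det2_self : det2 u u = 0 := by simp only [det2]; ring

lemma det2_comm : det2 v u = -det2 u v := by simp only [det2]; ring

@[simp] lemma det2_add_left (w : ℤ × ℤ) : det2 (u + w) v = det2 u v + det2 w v := by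
  simp only [det2, Prod.fst_add, Prod.snd_add]; ring

@[simp] lemma det2_add_right (w : ℤ × ℤ) : det2 u (v + w) = det2 u v + det2 u w := by
  simp only [det2, Prod.fst_add, Prod.snd_add]; ring

@[simp] lemma det2_sub_right (w : ℤ × ℤ) : det2 u (v - w) = det2 u v - det2 u w := by
  simp only [det2, Prod.fst_sub, Prod.snd_sub]; ring

@[simp] lemma det2_smul_right : det2 u (k • v) = k * det2 u v := by
  simp only [det2, Prod.smul_fst, Prod.smul_snd, smul_eq_mul]; ring

@[simp] lemma det2_neg_left : det2 (-u) v = -det2 u v := by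
  simp only [det2, Prod.fst_neg, Prod.snd_neg]; ring

@[simp] lemma det2_neg_right : det2 u (-v) = -det2 u v := by
  simp only [det2, Prod.fst_neg, Prod.snd_neg]; ring

end det2

lemma isCoprime_of_abs_det2_eq_one {u v : ℤ × ℤ} (h : |det2 u v| = 1) : IsCoprime v.1 v.2 := by
  rcases abs_eq (zero_le_one' ℤ) |>.mp h with h | h <;> simp only [det2] at h
  · exact ⟨-u.2, u.1, by linear_combination h⟩
  · exact ⟨u.2, -u.1, by linear_combination -h⟩

lemma ofVec_smul (v : ℤ × ℤ) {k : ℤ} (hk : k ≠ 0) : ofVec (k • v) = ofVec v := by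
  by_cases hv : v.2 = 0
  · simp [ofVec, hv]
  · simp only [ofVec, Prod.smul_fst, Prod.smul_snd, smul_eq_mul, mul_eq_zero, hk, hv, or_self,
      if_false, Int.cast_mul]
    rw [mul_div_mul_left _ _ (Int.cast_ne_zero.mpr hk)]

@[simp] lemma ofVec_neg (v : ℤ × ℤ) : ofVec (-v) = ofVec v := by
  simpa using ofVec_smul v (k := -1) (by norm_num)

lemma ofVec_rep (x : QHat) : ofVec (rep x) = x := by
  induction x using OnePoint.rec with
  | infty => simp [ofVec]
  | coe q => simp [ofVec, Rat.num_div_den]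

lemma isCoprime_rep (x : QHat) : IsCoprime (rep x).1 (rep x).2 := by
  induction x using OnePoint.rec with
  | infty => exact isCoprime_one_left
  | coe q => exact Int.isCoprime_iff_gcd_eq_one.mpr q.reduced

lemma rep_ofVec_of_pos {v : ℤ × ℤ} (hv : IsCoprime v.1 v.2) (hpos : 0 < v.2) :
    rep (ofVec v) = v := by
  have hco : v.1.natAbs.Coprime v.2.natAbs := Int.isCoprime_iff_gcd_eq_one.mp hv
  simp only [ofVec, hpos.ne', if_false]
  exact Prod.ext (Rat.num_div_eq_of_coprime hpos hco) (Rat.den_div_eq_of_coprime hpos hco)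

lemma rep_ofVec {v : ℤ × ℤ} (hv : IsCoprime v.1 v.2) :
    rep (ofVec v) = v ∨ rep (ofVec v) = -v := by
  rcases lt_trichotomy v.2 0 with hneg | hzero | hpos
  · right
    rw [← ofVec_neg]
    exact rep_ofVec_of_pos (by simpa using hv.neg_neg) (by simpa using hneg)
  · rw [hzero, isCoprime_zero_right, Int.isUnit_iff] at hv
    rcases hv with h | h <;> simp [ofVec, hzero, h, Prod.ext_iff]
  · exact .inl (rep_ofVec_of_pos hv hpos)

lemma ofVec_eq_of_det2_eq_zero {u v : ℤ × ℤ} (hu : IsCoprime u.1 u.2) (hv : IsCoprime v.1 v.2)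
    (h : det2 u v = 0) : ofVec u = ofVec v := by
  obtain ⟨x, y, hxy⟩ := hu
  have hvu : v = (x * v.1 + y * v.2) • u := by
    simp only [det2] at h
    ext <;> simp only [Prod.smul_fst, Prod.smul_snd, smul_eq_mul]
    · linear_combination (-v.1) * hxy - y * h
    · linear_combination (-v.2) * hxy + x * h
  have hk : x * v.1 + y * v.2 ≠ 0 := by
    rintro hk
    rw [hk, zero_smul] at hvu
    exact not_isCoprime_zero_zero (hvu ▸ hv)
  rw [hvu, ofVec_smul u hk]

lemma det2_eq_zero_of_ofVec_eq {u v : ℤ × ℤ} (hu : IsCoprime u.1 u.2) (hv : IsCoprime v.1 v.2)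
    (h : ofVec u = ofVec v) : det2 u v = 0 := by
  have h0 : det2 (rep (ofVec u)) (rep (ofVec v)) = 0 := by rw [h, det2_self]
  rcases rep_ofVec hu with hu' | hu' <;> rcases rep_ofVec hv with hv' | hv' <;>
    simpa [hu', hv'] using h0

lemma fareyNbr_ofVec {u v : ℤ × ℤ} (h : |det2 u v| = 1) : FareyNbr (ofVec u) (ofVec v) := by
  have hu : IsCoprime u.1 u.2 :=
    isCoprime_of_abs_det2_eq_one (u := v) (by rwa [det2_comm, abs_neg])
  rw [fareyNbr_iff]
  rcases rep_ofVec hu with hu' | hu' <;>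
    rcases rep_ofVec (isCoprime_of_abs_det2_eq_one h) with hv' | hv' <;> simp [hu', hv', h]

lemma IsFricke.edge_rel {κ : ℂ} {φ : QHat → ℂ} (hφ : IsFricke κ φ) {u v : ℤ × ℤ}
    (h : |det2 u v| = 1) :
    φ (ofVec (u + v)) + φ (ofVec (u - v)) = φ (ofVec u) * φ (ofVec v) := by
  have huv (w : ℤ × ℤ) (hw : |det2 u w| = 1) (hvw : |det2 v w| = 1) :
      FareyTriangle (ofVec u) (ofVec v) (ofVec w) :=
    ⟨fareyNbr_ofVec h, fareyNbr_ofVec hvw, fareyNbr_ofVec hw⟩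
  refine hφ.2 _ _ _ _ (huv _ ?_ ?_) (huv _ ?_ ?_) fun heq => ?_
  all_goals try simpa [det2_comm u v] using h
  have := det2_eq_zero_of_ofVec_eq (isCoprime_of_abs_det2_eq_one (u := u) (by simpa using h))
    (isCoprime_of_abs_det2_eq_one (u := u) (by simpa using h)) heq
  simp only [det2_add_left, det2_sub_right, det2_self, det2_comm u v] at this
  simp [show det2 u v = 0 by omega] at h

section Norms

variable {𝕜 : Type*} [NormedDivisionRing 𝕜]

lemma two_mul_lt_norm_add_norm {K : ℝ} (hK : 2 ≤ K) {a b c d : 𝕜} (h : a + b = c * d)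
    (hc : K < ‖c‖) (hd : K < ‖d‖) : 2 * K < ‖a‖ + ‖b‖ :=
  calc 2 * K ≤ K * K := by nlinarith
    _ < ‖c‖ * ‖d‖ := mul_lt_mul'' hc hd (by linarith) (by linarith)
    _ = ‖a + b‖ := by rw [h, norm_mul]
    _ ≤ ‖a‖ + ‖b‖ := norm_add_le a b

/-- Along a recursion `wₙ₊₁ = x wₙ - wₙ₋₁` with `|x| > 2` and `w₀ ≠ 0`, if `|w₋₁| ≤ |w₁|` then
`|w₀| < |w₂|`: the sequence cannot stop growing twice in a row. -/
lemma norm_lt_norm_mul_sub {x y z : 𝕜} (hx : 2 < ‖x‖) (hy : y ≠ 0) (h : ‖x * y - z‖ ≤ ‖z‖) :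
    ‖y‖ < ‖x * z - y‖ := by
  by_contra! hle
  have hxy : ‖x‖ * ‖y‖ ≤ ‖x * y - z‖ + ‖z‖ := by
    simpa [norm_mul] using norm_add_le (x * y - z) z
  have hxz : ‖x‖ * ‖z‖ ≤ ‖x * z - y‖ + ‖y‖ := by
    simpa [norm_mul] using norm_add_le (x * z - y) y
  have hy' : 0 < ‖y‖ := norm_pos_iff.mpr hy
  nlinarith [norm_nonneg z]

end Norms

structure IsAscendingEdge (φ : QHat → ℂ) (K : ℝ) (P Q : ℤ × ℤ) : Prop where
  abs_det2 : |det2 P Q| = 1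
  lt_norm_left : K < ‖φ (ofVec P)‖
  lt_norm_right : K < ‖φ (ofVec Q)‖
  norm_sub_lt : ‖φ (ofVec (P - Q))‖ < ‖φ (ofVec (P + Q))‖

namespace IsAscendingEdge

variable {κ : ℂ} {φ : QHat → ℂ} {K : ℝ} {P Q : ℤ × ℤ}

lemma of_norm_sub_le (hφ : IsFricke κ φ) (hK : 2 ≤ K) (hPQ : |det2 P Q| = 1)
    (hP : K < ‖φ (ofVec P)‖) (hQ : K < ‖φ (ofVec Q)‖) (hsub : ‖φ (ofVec (P - Q))‖ ≤ K) :
    IsAscendingEdge φ K P Q where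
  abs_det2 := hPQ
  lt_norm_left := hP
  lt_norm_right := hQ
  norm_sub_lt := by linarith [two_mul_lt_norm_add_norm hK (hφ.edge_rel hPQ) hP hQ]

lemma symm (h : IsAscendingEdge φ K P Q) : IsAscendingEdge φ K Q P where
  abs_det2 := by rw [det2_comm, abs_neg, h.abs_det2]
  lt_norm_left := h.lt_norm_right
  lt_norm_right := h.lt_norm_left
  norm_sub_lt := by rw [← neg_sub, ofVec_neg, add_comm]; exact h.norm_sub_lt

lemma lt_norm_add (hφ : IsFricke κ φ) (hK : 2 ≤ K) (h : IsAscendingEdge φ K P Q) :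
    K < ‖φ (ofVec (P + Q))‖ := by
  have := two_mul_lt_norm_add_norm hK (hφ.edge_rel h.abs_det2) h.lt_norm_left h.lt_norm_right
  linarith [h.norm_sub_lt]

lemma add_left (hφ : IsFricke κ φ) (hK : 2 ≤ K) (h : IsAscendingEdge φ K P Q) :
    IsAscendingEdge φ K (P + Q) Q where
  abs_det2 := by simpa using h.abs_det2
  lt_norm_left := h.lt_norm_add hφ hK
  lt_norm_right := h.lt_norm_right
  norm_sub_lt := by
    have hPQ := hφ.edge_rel h.abs_det2
    have hQPQ := hφ.edge_rel (u := Q) (v := P + Q) (by simpa [det2_comm P Q] using h.abs_det2)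
    rw [sub_add_cancel_right, ofVec_neg] at hQPQ
    rw [add_sub_cancel_right, add_comm (P + Q), eq_sub_of_add_eq hQPQ]
    refine norm_lt_norm_mul_sub (by linarith [h.lt_norm_right])
      (norm_pos_iff.mp (by linarith [h.lt_norm_left])) ?_
    rw [mul_comm, ← eq_sub_of_add_eq' hPQ]
    exact h.norm_sub_lt.le

theorem lt_norm_smul_add_smul (hφ : IsFricke κ φ) (hK : 2 ≤ K) (h : IsAscendingEdge φ K P Q)
    {a b : ℤ} (ha : 0 < a) (hb : 0 < b) : K < ‖φ (ofVec (a • P + b • Q))‖ := by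
  induction hn : (a + b).toNat using Nat.strong_induction_on generalizing P Q a b with
  | _ n ih =>
  wlog hab : a ≤ b generalizing P Q a b
  · rw [add_comm]
    exact this h.symm hb ha (by rw [add_comm, hn]) (by omega)
  rcases hab.lt_or_eq with hab | rfl
  · have hsplit : a • P + b • Q = a • (P + Q) + (b - a) • Q := by
      rw [smul_add, sub_smul]; abel
    rw [hsplit]
    exact ih _ (by omega) (h.add_left hφ hK) ha (by omega) rfl
  · rw [← smul_add, ofVec_smul _ ha.ne']
    exact h.lt_norm_add hφ hK

end IsAscendingEdge

lemma exists_smul_add_smul_of_two_le_det2 {u w : ℤ × ℤ} (hu : IsCoprime u.1 u.2)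
    (hw : IsCoprime w.1 w.2) (hD : 2 ≤ det2 u w) :
    ∃ P : ℤ × ℤ, ∃ a b : ℤ, det2 u P = 1 ∧ 0 < a ∧ 0 < b ∧ w = a • P + b • (P + u) := by
  obtain ⟨x, y, hxy⟩ := hu
  set D := det2 u w
  set s : ℤ × ℤ := (-y, x)
  have hus : det2 u s = 1 := by simp only [det2, s]; linear_combination hxy
  have hw_eq : w = det2 w s • u + D • s := by
    ext <;> simp only [det2, D, s, Prod.fst_add, Prod.snd_add, Prod.smul_fst, Prod.smul_snd,
      smul_eq_mul]
    · linear_combination (-w.1) * hxy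
    · linear_combination (-w.2) * hxy
  have hdiv := Int.mul_ediv_add_emod (det2 w s) D
  set n := det2 w s / D
  set r := det2 w s % D
  have hr0 : r ≠ 0 := by
    intro hr
    have hwD : w = D • (n • u + s) := by rw [hw_eq, ← hdiv, hr]; module
    have hunit : IsUnit D := hw.isUnit_of_dvd' ⟨(n • u + s).1, by rw [hwD]; rfl⟩
      ⟨(n • u + s).2, by rw [hwD]; rfl⟩
    rcases Int.isUnit_iff.mp hunit with h | h <;> omega
  have hrD : r < D := Int.emod_lt_of_pos _ (by omega)
  have hr : 0 ≤ r := Int.emod_nonneg _ (by omega)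
  refine ⟨n • u + s, D - r, r, ?_, by omega, by omega, ?_⟩
  · simp only [det2_add_right, det2_smul_right, det2_self, hus]; ring
  rw [hw_eq, ← hdiv]
  module

def fareyGraph : SimpleGraph QHat where
  Adj := FareyNbr
  symm := ⟨fun _ _ h => by rwa [FareyNbr, abs_sub_comm]⟩
  loopless := ⟨fun _ h => by simp [FareyNbr] at h⟩

abbrev sublevelGraph (φ : QHat → ℂ) (K : ℝ) : SimpleGraph {x // ‖φ x‖ ≤ K} :=
  fareyGraph.induce {x | ‖φ x‖ ≤ K}

section Reachable

variable {κ : ℂ} {φ : QHat → ℂ} {K : ℝ}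

lemma reachable_of_abs_det2_eq_one {u v : ℤ × ℤ} (h : |det2 u v| = 1) (hu : ‖φ (ofVec u)‖ ≤ K)
    (hv : ‖φ (ofVec v)‖ ≤ K) : (sublevelGraph φ K).Reachable ⟨ofVec u, hu⟩ ⟨ofVec v, hv⟩ :=
  (SimpleGraph.induce_adj.mpr (fareyNbr_ofVec h)).reachable

theorem reachable_ofVec (hφ : IsFricke κ φ) (hK : 2 ≤ K) {u w : ℤ × ℤ} (hu : IsCoprime u.1 u.2)
    (hw : IsCoprime w.1 w.2) (hKu : ‖φ (ofVec u)‖ ≤ K) (hKw : ‖φ (ofVec w)‖ ≤ K) :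
    (sublevelGraph φ K).Reachable ⟨ofVec u, hKu⟩ ⟨ofVec w, hKw⟩ := by
  induction hn : (det2 u w).natAbs using Nat.strong_induction_on generalizing u w with
  | _ n ih =>
  wlog hpos : 0 ≤ det2 u w generalizing w
  · have hKw' : ‖φ (ofVec (-w))‖ ≤ K := by rwa [ofVec_neg]
    convert this (w := -w) (by simpa using hw.neg_neg) hKw' (by simpa using hn) (by simp; omega)
      using 2
    simp
  rcases (show det2 u w = 0 ∨ det2 u w = 1 ∨ 2 ≤ det2 u w by omega) with h0 | h1 | h2
  · simp only [ofVec_eq_of_det2_eq_zero hu hw h0]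
    rfl
  · exact reachable_of_abs_det2_eq_one (by simp [h1]) hKu hKw
  obtain ⟨P, a, b, huP, ha, hb, rfl⟩ := exists_smul_add_smul_of_two_le_det2 hu hw h2
  have hPu : det2 P u = -1 := by rw [det2_comm, huP]
  have huQ : det2 u (P + u) = 1 := by rw [det2_add_right, huP, det2_self, add_zero]
  have hdet (v : ℤ × ℤ) : det2 v (a • P + b • (P + u)) = (a + b) * det2 v P + b * det2 v u := by
    simp only [det2_add_right, det2_smul_right]; ring
  have hPw : (det2 P (a • P + b • (P + u))).natAbs < n := by
    simp only [← hn, hdet, huP, hPu, det2_self]; omega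
  have hQw : (det2 (P + u) (a • P + b • (P + u))).natAbs < n := by
    simp only [← hn, hdet, det2_add_left, huP, hPu, det2_self]; omega
  by_cases hKP : ‖φ (ofVec P)‖ ≤ K
  · exact (reachable_of_abs_det2_eq_one (by simp [huP]) hKu hKP).trans
      (ih _ hPw (isCoprime_of_abs_det2_eq_one (u := u) (by simp [huP])) hw hKP hKw rfl)
  by_cases hKQ : ‖φ (ofVec (P + u))‖ ≤ K
  · exact (reachable_of_abs_det2_eq_one (by simp [huQ]) hKu hKQ).trans
      (ih _ hQw (isCoprime_of_abs_det2_eq_one (u := u) (by simp [huQ])) hw hKQ hKw rfl)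
  have hasc : IsAscendingEdge φ K P (P + u) :=
    .of_norm_sub_le hφ hK (by rw [det2_add_right, det2_self, hPu]; rfl) (not_le.mp hKP)
      (not_le.mp hKQ) (by rwa [sub_add_cancel_left, ofVec_neg])
  exact absurd hKw (not_le.mpr (hasc.lt_norm_smul_add_smul hφ hK ha hb))

theorem preconnected_sublevelGraph (hφ : IsFricke κ φ) (hK : 2 ≤ K) :
    (sublevelGraph φ K).Preconnected := by
  rintro ⟨x, hx⟩ ⟨y, hy⟩
  obtain ⟨u, hu, rfl⟩ : ∃ u, IsCoprime u.1 u.2 ∧ ofVec u = x :=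
    ⟨rep x, isCoprime_rep x, ofVec_rep x⟩
  obtain ⟨w, hw, rfl⟩ : ∃ w, IsCoprime w.1 w.2 ∧ ofVec w = y :=
    ⟨rep y, isCoprime_rep y, ofVec_rep y⟩
  exact reachable_ofVec hφ hK hu hw hx hy

end Reachable

theorem quasi_connectivity_general (κ : ℂ) (φ : QHat → ℂ) (hφ : IsFricke κ φ)
    (K : ℝ) (hK : 2 ≤ K) (a b : QHat)
    (ha : ‖φ a‖ ≤ K) (hb : ‖φ b‖ ≤ K) :
    ∃ (n : ℕ) (p : ℕ → QHat), p 0 = a ∧ p n = b ∧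
      (∀ i < n, FareyNbr (p i) (p (i + 1))) ∧
      (∀ i ≤ n, ‖φ (p i)‖ ≤ K) := by
  obtain ⟨W⟩ := preconnected_sublevelGraph hφ hK ⟨a, ha⟩ ⟨b, hb⟩
  exact ⟨W.length, fun i => W.getVert i, by simp, by simp,
    fun _ hi => SimpleGraph.induce_adj.mp (W.adj_getVert_succ hi), fun i _ => (W.getVert i).2⟩

/-- **Quasi-connectivity.** For `κ ≠ 2` and `K ≥ 2`, the set
`𝒞(K) = {X ∈ ℚ̂ : |φ(X)| ≤ K}` is connected in the Farey graph: any two of its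
elements are joined by a path of Farey edges whose vertices all lie in `𝒞(K)`. -/
theorem quasi_connectivity (κ : ℂ) (hκ : κ ≠ 2) (φ : QHat → ℂ) (hφ : IsFricke κ φ)
    (K : ℝ) (hK : 2 ≤ K) (a b : QHat)
    (ha : ‖φ a‖ ≤ K) (hb : ‖φ b‖ ≤ K) :
    ∃ (n : ℕ) (p : ℕ → QHat), p 0 = a ∧ p n = b ∧
      (∀ i < n, FareyNbr (p i) (p (i + 1))) ∧
      (∀ i ≤ n, ‖φ (p i)‖ ≤ K) :=
  quasi_connectivity_general κ φ hφ K hK a b ha hb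

end TWZ
end
end

section
/- Let x, y, z, y', z' be complex numbers satisfying z + z' = x·y and y + y' = x·z. If |z| ≥ |z'| and |y| ≥ |y'|, then |x| ≤ 2 or (y = 0 and z = 0). -/
open Filter Topology

noncomputable section

namespace TWZ

theorem norm_add_le_two_mul_of_norm_le {E : Type*} [SeminormedAddGroup E] {z z' : E}
    (h : ‖z'‖ ≤ ‖z‖) : ‖z + z'‖ ≤ 2 * ‖z‖ := by
  linarith [norm_add_le z z']

/-- Adding the two inequalities gives `a * (b + c) ≤ k * (b + c)`. -/
theorem le_or_eq_zero_of_mul_le_of_mul_le {α : Type*} [CommRing α] [LinearOrder α]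
    [IsStrictOrderedRing α] {a b c k : α} (hb : 0 ≤ b) (hc : 0 ≤ c)
    (hab : a * b ≤ k * c) (hac : a * c ≤ k * b) : a ≤ k ∨ (b = 0 ∧ c = 0) := by
  rcases (add_nonneg hb hc).eq_or_lt with hbc | hbc
  · exact Or.inr ((add_eq_zero_iff_of_nonneg hb hc).mp hbc.symm)
  · refine Or.inl (le_of_mul_le_mul_right ?_ hbc)
    linarith

/-- If `z + z' = x·y`, `y + y' = x·z`, `|z| ≥ |z'|` and `|y| ≥ |y'|`,
then `|x| ≤ 2` or (`y = 0` and `z = 0`). -/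
theorem two_arrows_pointing_out (x y z y' z' : ℂ)
    (h1 : z + z' = x * y) (h2 : y + y' = x * z)
    (hz : ‖z'‖ ≤ ‖z‖) (hy : ‖y'‖ ≤ ‖y‖) :
    ‖x‖ ≤ 2 ∨ (y = 0 ∧ z = 0) := by
  have hxy : ‖x‖ * ‖y‖ ≤ 2 * ‖z‖ := by
    rw [← norm_mul, ← h1]
    exact norm_add_le_two_mul_of_norm_le hz
  have hxz : ‖x‖ * ‖z‖ ≤ 2 * ‖y‖ := by
    rw [← norm_mul, ← h2]
    exact norm_add_le_two_mul_of_norm_le hy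
  simpa only [norm_eq_zero] using
    le_or_eq_zero_of_mul_le_of_mul_le (norm_nonneg y) (norm_nonneg z) hxy hxz

end TWZ
end
end

section
/- Assume x is not a real number in the interval [−2,2] and x² ≠ κ + 2. Then there exist λ ∈ ℂ with |λ| > 1 and λ + λ⁻¹ = x, and nonzero complex numbers A, B with A·B = (x² − κ − 2)/(x² − 4), such that y(n) = A·λⁿ + B·λ⁻ⁿ for all n ∈ ℤ. In particular, |y(n)| → ∞ (exponentially fast) both as n → +∞ and as n → −∞. -/
open Filter Topology

noncomputable section

namespace TWZ

/-! The characteristic roots of the recurrence are `λ, λ⁻¹` with `λ + λ⁻¹ = x`. Writing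
`x = 2 cos z`, they are `exp (± i z)`, of modulus `exp (∓ Im z)`; they lie on the unit circle
exactly when `z` is real, i.e. `x ∈ [-2, 2]`. Otherwise `|λ| > 1` for one of them, and `y` is the
Binet combination `A λⁿ + B λ⁻ⁿ` fitted to `y 0, y 1`. Substituting into the level relation gives
`A B (λ - λ⁻¹)² = x² - κ - 2`, so `x² ≠ κ + 2` forces `A, B ≠ 0`, and each of the two terms
dominates in one direction. -/

theorem eq_of_recurrence {R : Type*} [CommRing R] {x : R} {f g : ℤ → R}
    (hf : ∀ n, f (n + 1) + f (n - 1) = x * f n) (hg : ∀ n, g (n + 1) + g (n - 1) = x * g n)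
    (h0 : f 0 = g 0) (h1 : f 1 = g 1) : f = g := by
  suffices key : ∀ n : ℤ, f n = g n ∧ f (n + 1) = g (n + 1) from funext fun n => (key n).1
  intro n
  induction n using Int.induction_on with
  | zero => exact ⟨h0, by simpa using h1⟩
  | succ i ih =>
    refine ⟨ih.2, ?_⟩
    have hfi := hf (i + 1)
    have hgi := hg (i + 1)
    simp only [add_sub_cancel_right] at hfi hgi
    linear_combination hfi - hgi - ih.1 + x * ih.2
  | pred i ih =>
    refine ⟨?_, by simpa using ih.1⟩
    linear_combination hf (-i) - hg (-i) + x * ih.1 - ih.2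

section Binet

variable {K : Type*} [Field K] {l : K}

theorem binet_recurrence (hl : l ≠ 0) (A B : K) (n : ℤ) :
    (A * l ^ (n + 1) + B * l ^ (-(n + 1))) + (A * l ^ (n - 1) + B * l ^ (-(n - 1))) =
      (l + l⁻¹) * (A * l ^ n + B * l ^ (-n)) := by
  rw [neg_add, neg_sub', zpow_add₀ hl, zpow_sub₀ hl, zpow_sub₀ hl, zpow_add₀ hl]
  field_simp
  ring

theorem eq_binet_of_recurrence (hl : l ≠ 0) (hd : l - l⁻¹ ≠ 0) {y : ℤ → K}
    (hrec : ∀ n, y (n + 1) + y (n - 1) = (l + l⁻¹) * y n) (n : ℤ) :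
    y n = (y 1 - l⁻¹ * y 0) / (l - l⁻¹) * l ^ n + (l * y 0 - y 1) / (l - l⁻¹) * l ^ (-n) := by
  refine congrFun (eq_of_recurrence (g := fun n => _ * l ^ n + _ * l ^ (-n)) hrec
    (binet_recurrence hl _ _) ?_ ?_) n
  · rw [neg_zero, zpow_zero, mul_one, mul_one, ← add_div, eq_div_iff hd]
    ring
  · rw [zpow_one, zpow_neg_one, div_mul_eq_mul_div, div_mul_eq_mul_div, ← add_div, eq_div_iff hd]
    field_simp
    ring

theorem add_inv_sq_sub_four (hl : l ≠ 0) : (l + l⁻¹) ^ 2 - 4 = (l - l⁻¹) ^ 2 := by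
  field_simp
  ring

theorem binet_coeff_mul (hl : l ≠ 0) (a b : K) :
    (b - l⁻¹ * a) / (l - l⁻¹) * ((l * a - b) / (l - l⁻¹)) =
      ((l + l⁻¹) * a * b - a ^ 2 - b ^ 2) / ((l + l⁻¹) ^ 2 - 4) := by
  rw [add_inv_sq_sub_four hl, div_mul_div_comm, ← sq]
  congr 1
  field_simp
  ring

end Binet

theorem tendsto_norm_binet_atTop {𝕜 : Type*} [NormedField 𝕜] {l : 𝕜} (hl : 1 < ‖l‖)
    {A : 𝕜} (hA : A ≠ 0) (B : 𝕜) :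
    Tendsto (fun n : ℕ => ‖A * l ^ (n : ℤ) + B * l ^ (-(n : ℤ))‖) atTop atTop := by
  have hdom : Tendsto (fun n : ℕ => ‖A‖ * ‖l‖ ^ n) atTop atTop :=
    (tendsto_pow_atTop_atTop_of_one_lt hl).const_mul_atTop (norm_pos_iff.mpr hA)
  have hdecay : Tendsto (fun n : ℕ => ‖B * l⁻¹ ^ n‖) atTop (𝓝 0) := by
    have hl' : ‖l⁻¹‖ < 1 := by
      rw [norm_inv]
      exact inv_lt_one_of_one_lt₀ hl
    simpa using ((tendsto_pow_atTop_nhds_zero_of_norm_lt_one hl').const_mul B).norm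
  refine tendsto_atTop_mono (fun n => ?_) (hdom.atTop_add hdecay.neg)
  simp only [zpow_neg, zpow_natCast, ← inv_pow]
  rw [← norm_pow, ← norm_mul, ← sub_eq_add_neg]
  exact norm_sub_le_norm_add _ _

theorem exists_one_lt_norm_add_inv_eq {x : ℂ} (hx : ¬ ∃ r : ℝ, -2 ≤ r ∧ r ≤ 2 ∧ x = r) :
    ∃ l : ℂ, 1 < ‖l‖ ∧ l + l⁻¹ = x := by
  obtain ⟨z, hz⟩ := Complex.cos_surjective (x / 2)
  have hx_cos : x = 2 * Complex.cos z := by rw [hz]; ring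
  have him : z.im ≠ 0 := by
    intro him
    refine hx ⟨2 * Real.cos z.re, by linarith [Real.neg_one_le_cos z.re], by
      linarith [Real.cos_le_one z.re], ?_⟩
    have hz : (z.re : ℂ) = z := Complex.ext rfl (by simp [him])
    rw [hx_cos, Complex.ofReal_mul, Complex.ofReal_cos, hz]
    norm_num
  -- `cos` is even, so we may assume `Im z < 0`, which makes `|exp (z I)| > 1`.
  wlog hneg : z.im < 0 generalizing z
  · refine this (-z) (by rw [Complex.cos_neg, hz]) (by rw [Complex.cos_neg, hx_cos])
      (by simpa using him) (by simpa using (not_lt.mp hneg).lt_of_ne him.symm)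
  refine ⟨Complex.exp (z * Complex.I), ?_, ?_⟩
  · rw [Complex.norm_exp, Complex.mul_I_re]
    exact Real.one_lt_exp_iff.mpr (by linarith)
  · rw [← Complex.exp_neg, hx_cos, Complex.two_cos, neg_mul]

/-- Neighbors of `X` when `x ∉ [-2,2]` and `x² ≠ κ + 2`: the values
`y(n)` are `A·λⁿ + B·λ⁻ⁿ` with `|λ| > 1`, `λ + λ⁻¹ = x`, `A, B ≠ 0`,
`A·B = (x² − κ − 2)/(x² − 4)`, and `|y(n)| → ∞` as `n → ±∞`. -/
theorem neighbors_generic (κ x : ℂ) (y : ℤ → ℂ)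
    (hrec : ∀ n : ℤ, y (n + 1) + y (n - 1) = x * y n)
    (hrel : x ^ 2 + y 0 ^ 2 + y 1 ^ 2 - x * y 0 * y 1 - 2 = κ)
    (hx1 : ¬ ∃ r : ℝ, -2 ≤ r ∧ r ≤ 2 ∧ x = (r : ℂ))
    (hx2 : x ^ 2 ≠ κ + 2) :
    ∃ lam A B : ℂ, 1 < ‖lam‖ ∧ lam + lam⁻¹ = x ∧ A ≠ 0 ∧ B ≠ 0 ∧
      A * B = (x ^ 2 - κ - 2) / (x ^ 2 - 4) ∧
      (∀ n : ℤ, y n = A * lam ^ n + B * lam ^ (-n)) ∧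
      Tendsto (fun n : ℕ => ‖y (n : ℤ)‖) atTop atTop ∧
      Tendsto (fun n : ℕ => ‖y (-(n : ℤ))‖) atTop atTop := by
  obtain ⟨l, hl, rfl⟩ := exists_one_lt_norm_add_inv_eq hx1
  have hl0 : l ≠ 0 := norm_pos_iff.mp (one_pos.trans hl)
  have hd : l - l⁻¹ ≠ 0 := fun h => by
    have := congrArg norm (sub_eq_zero.mp h)
    rw [norm_inv] at this
    linarith [inv_lt_one_of_one_lt₀ hl]
  set A := (y 1 - l⁻¹ * y 0) / (l - l⁻¹)
  set B := (l * y 0 - y 1) / (l - l⁻¹)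
  have hAB : A * B = ((l + l⁻¹) ^ 2 - κ - 2) / ((l + l⁻¹) ^ 2 - 4) := by
    rw [binet_coeff_mul hl0, ← hrel]
    congr 1
    ring
  have hABne : A * B ≠ 0 := by
    rw [hAB, add_inv_sq_sub_four hl0]
    exact div_ne_zero (by rwa [sub_sub, sub_ne_zero]) (pow_ne_zero 2 hd)
  have hy := eq_binet_of_recurrence hl0 hd hrec
  refine ⟨l, A, B, hl, rfl, left_ne_zero_of_mul hABne, right_ne_zero_of_mul hABne, hAB, hy,
    ?_, ?_⟩
  · exact (tendsto_norm_binet_atTop hl (left_ne_zero_of_mul hABne) B).congr fun n => by rw [hy]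
  · refine (tendsto_norm_binet_atTop hl (right_ne_zero_of_mul hABne) A).congr fun n => ?_
    rw [hy, neg_neg, add_comm]

end TWZ
end
end

section
/- If x = 2, then there is a complex number δ with δ² = κ − 2 such that y(n) = y(0) + n·δ for all n ∈ ℤ. If x = −2, then there is a complex number δ with δ² = κ − 2 such that y(n) = (−1)ⁿ·(y(0) + n·δ) for all n ∈ ℤ. In particular, if κ ≠ 2, then in both cases |y(n)| grows linearly in |n| (and tends to ∞ as n → ±∞). -/
open Filter Topology

noncomputable section

namespace TWZ

/-!
For `x = 2` the recurrence says that the second differences of `y` vanish, so `y` is affine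
with slope `δ = y(1) - y(0)`, and the relation becomes `δ² = κ - 2`. Twisting by `(-1)ⁿ`
exchanges the recurrences for `x` and `-x`, which reduces `x = -2` to `x = 2`. If `κ ≠ 2`
then `δ ≠ 0`, and `|y(n)| ≥ |δ| |n| - |y(0)|`.
-/

def SolvesRecurrence {R : Type*} [CommRing R] (x : R) (y : ℤ → R) : Prop :=
  ∀ n : ℤ, y (n + 1) + y (n - 1) = x * y n

namespace SolvesRecurrence

section CommRing

variable {R : Type*} [CommRing R] {x : R} {y z : ℤ → R}

theorem eq_of_eq_zero_of_eq_one (hy : SolvesRecurrence x y) (hz : SolvesRecurrence x z)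
    (h0 : y 0 = z 0) (h1 : y 1 = z 1) : y = z := by
  suffices h : ∀ n : ℤ, y n = z n ∧ y (n + 1) = z (n + 1) from funext fun n => (h n).1
  intro n
  induction n using Int.induction_on with
  | zero => exact ⟨h0, h1⟩
  | succ k ih =>
    refine ⟨ih.2, ?_⟩
    have hyk := hy (k + 1)
    have hzk := hz (k + 1)
    simp only [add_sub_cancel_right] at hyk hzk
    linear_combination hyk - hzk - ih.1 + x * ih.2
  | pred k ih =>
    refine ⟨?_, by simpa using ih.1⟩
    linear_combination hy (-k) - hz (-k) - ih.2 + x * ih.1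

theorem affine (a d : R) : SolvesRecurrence 2 (fun n => a + n * d) := fun n => by
  push_cast
  ring

theorem eq_affine_of_two (hy : SolvesRecurrence 2 y) :
    ∀ n : ℤ, y n = y 0 + n * (y 1 - y 0) := by
  have h := hy.eq_of_eq_zero_of_eq_one (affine (y 0) (y 1 - y 0)) (by simp) (by simp)
  exact fun n => congrFun h n

end CommRing

theorem neg_one_zpow_mul {K : Type*} [Field K] {x : K} {y : ℤ → K}
    (hy : SolvesRecurrence x y) : SolvesRecurrence (-x) (fun n => (-1) ^ n * y n) := by
  intro n
  have hne : (-1 : K) ≠ 0 := by norm_num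
  simp only [zpow_add_one₀ hne, zpow_sub_one₀ hne]
  linear_combination -(-1) ^ n * hy n

theorem eq_neg_one_zpow_mul_affine_of_neg_two {K : Type*} [Field K] {y : ℤ → K}
    (hy : SolvesRecurrence (-2) y) : ∀ n : ℤ, y n = (-1) ^ n * (y 0 + n * (-y 1 - y 0)) := by
  intro n
  have hz := hy.neg_one_zpow_mul
  rw [neg_neg] at hz
  have hn := hz.eq_affine_of_two n
  simp only [zpow_zero, zpow_one, one_mul, neg_one_mul] at hn
  rw [← hn, ← mul_assoc, ← mul_zpow, neg_one_mul, neg_neg, one_zpow, one_mul]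

end SolvesRecurrence

theorem norm_mul_abs_sub_norm_le_norm_add_intCast_mul {𝕜 : Type*} [RCLike 𝕜]
    (a δ : 𝕜) (n : ℤ) : ‖δ‖ * |(n : ℝ)| - ‖a‖ ≤ ‖a + n * δ‖ := by
  have h := norm_sub_norm_le ((n : 𝕜) * δ) (-a)
  have hn : ‖(n : 𝕜)‖ = |(n : ℝ)| := by rw [← RCLike.ofReal_intCast, RCLike.norm_ofReal]
  rw [sub_neg_eq_add, add_comm, norm_neg, norm_mul, hn] at h
  linarith

theorem tendsto_atTop_of_linear_lower_bound {f : ℤ → ℝ} {c C : ℝ} (hc : 0 < c)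
    (hf : ∀ n : ℤ, c * |(n : ℝ)| - C ≤ f n) :
    Tendsto (fun n : ℕ => f n) atTop atTop ∧ Tendsto (fun n : ℕ => f (-n)) atTop atTop := by
  have hlin : Tendsto (fun n : ℕ => c * (n : ℝ) - C) atTop atTop :=
    tendsto_atTop_add_const_right _ _ (tendsto_natCast_atTop_atTop.const_mul_atTop hc)
  exact ⟨tendsto_atTop_mono (fun n => by simpa using hf n) hlin,
    tendsto_atTop_mono (fun n => by simpa using hf (-n)) hlin⟩

/-- Neighbors of `X` when `x = ±2`: if `x = 2` then
`y(n) = y(0) + nδ` with `δ² = κ − 2`; if `x = −2` then `y(n) = (−1)ⁿ(y(0) + nδ)`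
with `δ² = κ − 2`; and if moreover `κ ≠ 2`, then `|y(n)|` grows linearly in `|n|`
and tends to `∞` as `n → ±∞`. -/
theorem neighbors_parabolic (κ x : ℂ) (y : ℤ → ℂ)
    (hrec : ∀ n : ℤ, y (n + 1) + y (n - 1) = x * y n)
    (hrel : x ^ 2 + y 0 ^ 2 + y 1 ^ 2 - x * y 0 * y 1 - 2 = κ) :
    (x = 2 → ∃ δ : ℂ, δ ^ 2 = κ - 2 ∧ ∀ n : ℤ, y n = y 0 + (n : ℂ) * δ) ∧
    (x = -2 → ∃ δ : ℂ, δ ^ 2 = κ - 2 ∧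
      ∀ n : ℤ, y n = (-1) ^ n * (y 0 + (n : ℂ) * δ)) ∧
    (κ ≠ 2 → (x = 2 ∨ x = -2) →
      (∃ c : ℝ, 0 < c ∧ ∃ C : ℝ, ∀ n : ℤ, c * |(n : ℝ)| - C ≤ ‖y n‖) ∧
      Tendsto (fun n : ℕ => ‖y (n : ℤ)‖) atTop atTop ∧
      Tendsto (fun n : ℕ => ‖y (-(n : ℤ))‖) atTop atTop) := by
  have hy : SolvesRecurrence x y := hrec
  have two : x = 2 → ∃ δ : ℂ, δ ^ 2 = κ - 2 ∧ ∀ n : ℤ, y n = y 0 + (n : ℂ) * δ := by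
    rintro rfl
    exact ⟨y 1 - y 0, by linear_combination hrel, hy.eq_affine_of_two⟩
  have neg_two : x = -2 → ∃ δ : ℂ, δ ^ 2 = κ - 2 ∧
      ∀ n : ℤ, y n = (-1) ^ n * (y 0 + (n : ℂ) * δ) := by
    rintro rfl
    exact ⟨-y 1 - y 0, by linear_combination hrel, hy.eq_neg_one_zpow_mul_affine_of_neg_two⟩
  refine ⟨two, neg_two, fun hκ hx => ?_⟩
  obtain ⟨δ, hδ, hnorm⟩ : ∃ δ : ℂ, δ ^ 2 = κ - 2 ∧ ∀ n : ℤ, ‖y n‖ = ‖y 0 + n * δ‖ := by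
    rcases hx with hx | hx
    · obtain ⟨δ, hδ, hy⟩ := two hx
      exact ⟨δ, hδ, fun n => by rw [hy n]⟩
    · obtain ⟨δ, hδ, hy⟩ := neg_two hx
      exact ⟨δ, hδ, fun n => by rw [hy n, norm_mul, norm_zpow, norm_neg, norm_one, one_zpow,
        one_mul]⟩
  have hδ0 : 0 < ‖δ‖ := norm_pos_iff.mpr fun h => hκ (by linear_combination δ * h - hδ)
  have hlow : ∀ n : ℤ, ‖δ‖ * |(n : ℝ)| - ‖y 0‖ ≤ ‖y n‖ := fun n =>
    hnorm n ▸ norm_mul_abs_sub_norm_le_norm_add_intCast_mul (y 0) δ n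
  exact ⟨⟨‖δ‖, hδ0, ‖y 0‖, hlow⟩, tendsto_atTop_of_linear_lower_bound hδ0 hlow⟩

end TWZ
end
end

section
/- Let κ ∈ ℂ with κ ≠ 2, let φ be a Fricke trace map of level κ, and let (X,Y) be a Farey edge with opposite vertices Z and Z', where Z lies in the open arc A of ℝ̂ ∖ {X,Y} (and Z' in the other open arc). If |φ(X)| > 2, |φ(Y)| > 2 and |φ(Z)| ≥ |φ(Z')|, then |φ(W)| ≥ min(|φ(X)|, |φ(Y)|) for every W ∈ ℚ̂ lying in the closure of A, and consequently ℰ(φ) ∩ A = ∅. -/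
open Filter Topology

noncomputable section

namespace TWZ

/-!
Write `p/q ∈ ℚ̂` as the primitive vector `(p, q) ∈ ℤ²`. The side of a Farey edge `(U, V)` on
which a vertex `W` lies is the sign of `det W U * det W V`, and by the Plücker relation a vertex
on the side of an opposite vertex `M` is either `M` or lies beyond one of the edges `(U, M)`,
`(M, V)`, with smaller determinants. So the Farey tree beyond an edge can be explored by
induction.

If `|φ U|, |φ V| ≥ μ > 2` and the vertex `P` behind `(U, V)` has `|φ P| ≤ max(|φ U|, |φ V|)`,
the edge relation gives, for the vertex `N` in front, `|φ N| ≥ |φ U| |φ V| - |φ P| ≥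
max(|φ U|, |φ V|) + μ (μ - 2)`, and the edges `(U, N)`, `(N, V)` satisfy the same hypotheses.
Hence beyond `(U, V)` the values `|φ|` exceed `max(|φ U|, |φ V|)` and grow by `μ (μ - 2)` per
level, so only finitely many stay below any bound. In the theorem, `φ Z + φ Z' = φ X φ Y` and
`|φ Z'| ≤ |φ Z|` give `|φ Z| ≥ |φ X|, |φ Y|`, so this applies to the edges `(X, Z)`, `(Z, Y)`
with `μ = min(|φ X|, |φ Y|)`.

The sign of `det W X * det W Y` extends to a continuous function on `ℝ̂` vanishing only at `X`
and `Y`, so on the connected set `A` it has the sign it has at `Z`.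
-/

open scoped OnePoint

@[simp] lemma qnum_infty : qnum ∞ = 1 := rfl
@[simp] lemma qden_infty : qden ∞ = 0 := rfl
@[simp] lemma qnum_coe (q : ℚ) : qnum q = q.num := rfl
@[simp] lemma qden_coe (q : ℚ) : qden q = q.den := rfl

def det (a b : QHat) : ℤ := qnum a * qden b - qnum b * qden a

lemma det_swap (a b : QHat) : det b a = -det a b := by
  unfold det; ring

lemma det_eq_zero_iff {a b : QHat} : det a b = 0 ↔ a = b := by
  induction a using OnePoint.rec with
  | infty =>
    induction b using OnePoint.rec with
    | infty => simp [det]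
    | coe q => simp [det, OnePoint.infty_ne_coe]
  | coe p =>
    induction b using OnePoint.rec with
    | infty => simp [det, OnePoint.coe_ne_infty]
    | coe q => simp [det, Rat.eq_iff_mul_eq_mul, sub_eq_zero]

lemma det_plucker (a b c d : QHat) :
    det a b * det c d - det a c * det b d + det a d * det b c = 0 := by
  unfold det; ring

lemma fareyNbr_iff_s15 {a b : QHat} : FareyNbr a b ↔ (det a b).natAbs = 1 := by
  rw [FareyNbr, ← det, Int.abs_eq_natAbs]; omega

lemma FareyNbr.symm {a b : QHat} (h : FareyNbr a b) : FareyNbr b a := by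
  rw [fareyNbr_iff_s15, det_swap, Int.natAbs_neg, ← fareyNbr_iff_s15]; exact h

lemma FareyNbr.ne {a b : QHat} (h : FareyNbr a b) : a ≠ b := by
  rintro rfl; simp [fareyNbr_iff_s15, det_eq_zero_iff.mpr rfl] at h

lemma FareyNbr.det_mul_self {a b : QHat} (h : FareyNbr a b) : det a b * det a b = 1 := by
  rw [← Int.natAbs_mul_self', fareyNbr_iff_s15.mp h]; rfl

lemma exists_qnum_qden {p q : ℤ} (hq : 0 < q) (h : IsCoprime p q) :
    ∃ N : QHat, qnum N = p ∧ qden N = q := by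
  have hpq : p.natAbs.Coprime q.natAbs := Int.isCoprime_iff_gcd_eq_one.mp h
  exact ⟨((p / q : ℚ) : QHat), Rat.num_div_eq_of_coprime hq hpq,
    Rat.den_div_eq_of_coprime hq hpq⟩

lemma exists_det_eq_mul {p q : ℤ} (h : IsCoprime p q) :
    ∃ (N : QHat) (σ : ℤ), σ * σ = 1 ∧ ∀ W, det N W = σ * (p * qden W - qnum W * q) := by
  suffices ∃ (N : QHat) (σ : ℤ), σ * σ = 1 ∧ qnum N = σ * p ∧ qden N = σ * q by
    obtain ⟨N, σ, hσ, hp, hq⟩ := this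
    exact ⟨N, σ, hσ, fun W => by rw [det, hp, hq]; ring⟩
  rcases lt_trichotomy q 0 with hq | rfl | hq
  · obtain ⟨N, hp, hq⟩ := exists_qnum_qden (neg_pos.mpr hq) h.neg_neg
    exact ⟨N, -1, by norm_num, by rw [hp]; ring, by rw [hq]; ring⟩
  · rcases Int.isUnit_iff.mp (isCoprime_zero_right.mp h) with rfl | rfl
    · exact ⟨∞, 1, by norm_num, by simp, by simp⟩
    · exact ⟨∞, -1, by norm_num, by simp, by simp⟩
  · obtain ⟨N, hp, hq⟩ := exists_qnum_qden hq h
    exact ⟨N, 1, by norm_num, by rw [hp]; ring, by rw [hq]; ring⟩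

def side (U V W : QHat) : ℤ := det W U * det W V

def farSide (U V P : QHat) : Set QHat := {W | side U V W * side U V P < 0}

lemma side_ne_zero {U V W : QHat} (hU : W ≠ U) (hV : W ≠ V) : side U V W ≠ 0 :=
  mul_ne_zero (det_eq_zero_iff.not.mpr hU) (det_eq_zero_iff.not.mpr hV)

lemma eq_or_natAbs_sub_lt {a b : ℤ} (h : 0 < a * b) :
    a = b ∨ (0 < a * (b - a) ∧ (b - a).natAbs < b.natAbs) ∨
      (b * (b - a) < 0 ∧ (b - a).natAbs < a.natAbs) := by
  rcases lt_trichotomy a b with hab | rfl | hab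
  · rcases pos_and_pos_or_neg_and_neg_of_mul_pos h with ⟨ha, hb⟩ | ⟨ha, hb⟩
    · exact Or.inr (Or.inl ⟨mul_pos ha (by omega), by omega⟩)
    · exact Or.inr (Or.inr ⟨mul_neg_of_neg_of_pos hb (by omega), by omega⟩)
  · exact Or.inl rfl
  · rcases pos_and_pos_or_neg_and_neg_of_mul_pos h with ⟨ha, hb⟩ | ⟨ha, hb⟩
    · exact Or.inr (Or.inr ⟨mul_neg_of_pos_of_neg hb (by omega), by omega⟩)
    · exact Or.inr (Or.inl ⟨mul_pos_of_neg_of_neg ha (by omega), by omega⟩)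

lemma eq_or_mem_farSide_of_side_pos {U V M W : QHat} (hUV : FareyNbr U V) (hUM : FareyNbr U M)
    (hVM : FareyNbr V M) (hW : 0 < side U V W * side U V M) :
    W = M ∨ (W ∈ farSide U M V ∧ (det W M).natAbs < (det W V).natAbs) ∨
      (W ∈ farSide M V U ∧ (det W M).natAbs < (det W U).natAbs) := by
  set a := det W U * det V M
  set b := det W V * det U M
  have hc : det W M * det U V = b - a := by linear_combination det_plucker W U V M
  have hab : 0 < a * b := by
    unfold side at hW; rw [det_swap U M, det_swap V M] at hW; linarith
  have hnat : (det W M).natAbs = (b - a).natAbs := by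
    rw [← hc, Int.natAbs_mul, fareyNbr_iff_s15.mp hUV, mul_one]
  have ha : a.natAbs = (det W U).natAbs := by
    rw [Int.natAbs_mul, fareyNbr_iff_s15.mp hVM, mul_one]
  have hb : b.natAbs = (det W V).natAbs := by
    rw [Int.natAbs_mul, fareyNbr_iff_s15.mp hUM, mul_one]
  rcases eq_or_natAbs_sub_lt hab with hab | ⟨hpos, hlt⟩ | ⟨hneg, hlt⟩
  · left
    rw [← det_eq_zero_iff]
    have : det W M * det U V = 0 := by rw [hc, hab, sub_self]
    exact (mul_eq_zero.mp this).resolve_right (det_eq_zero_iff.not.mpr hUV.ne)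
  · right; left
    refine ⟨?_, by omega⟩
    show side U M W * side U M V < 0
    unfold side; rw [det_swap U V]
    linear_combination (-(det W U * det V M)) * hc + hpos
  · right; right
    refine ⟨?_, by omega⟩
    show side M V W * side M V U < 0
    unfold side
    linear_combination (det W V * det U M) * hc + hneg

lemma exists_side_eq_neg {U V P : QHat} (hUV : FareyNbr U V) (hUP : FareyNbr U P)
    (hVP : FareyNbr V P) :
    ∃ N, FareyNbr U N ∧ FareyNbr V N ∧ side U V N = -side U V P := by
  -- By Cramer's rule `P = ±(det P V • U - det P U • V)`; flipping the sign of `V` gives `N`.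
  set p := det U V * (det P V * qnum U + det P U * qnum V)
  set q := det U V * (det P V * qden U + det P U * qden V)
  have he := hUV.det_mul_self
  have hU : p * qden U - qnum U * q = -det P U := by
    simp only [p, q, det] at he ⊢
    linear_combination (-(qnum P * qden U - qnum U * qden P)) * he
  have hV : p * qden V - qnum V * q = det P V := by
    simp only [p, q, det] at he ⊢
    linear_combination (qnum P * qden V - qnum V * qden P) * he
  have hcop : IsCoprime p q := ⟨-det P U * qden U, det P U * qnum U,
    by linear_combination (-det P U) * hU + hUP.symm.det_mul_self⟩
  obtain ⟨N, σ, hσ, hN⟩ := exists_det_eq_mul hcop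
  have hσ' : σ.natAbs = 1 := by simpa [Int.natAbs_mul] using congrArg Int.natAbs hσ
  refine ⟨N, ?_, ?_, ?_⟩
  · rw [fareyNbr_iff_s15, det_swap, Int.natAbs_neg, hN, hU, Int.natAbs_mul, Int.natAbs_neg,
      fareyNbr_iff_s15.mp hUP.symm, hσ']
  · rw [fareyNbr_iff_s15, det_swap, Int.natAbs_neg, hN, hV, Int.natAbs_mul,
      fareyNbr_iff_s15.mp hVP.symm, hσ']
  · simp only [side, hN, hU, hV]
    linear_combination (-(det P U * det P V)) * hσ

lemma exists_farSide_split {U V P : QHat} (hUV : FareyNbr U V) (hUP : FareyNbr U P)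
    (hVP : FareyNbr V P) :
    ∃ N, FareyNbr U N ∧ FareyNbr V N ∧ N ≠ P ∧ ∀ W ∈ farSide U V P, W = N ∨
      (W ∈ farSide U N V ∧ (det W N).natAbs < (det W V).natAbs) ∨
      (W ∈ farSide N V U ∧ (det W N).natAbs < (det W U).natAbs) := by
  obtain ⟨N, hUN, hVN, hN⟩ := exists_side_eq_neg hUV hUP hVP
  have hP : side U V P ≠ 0 := side_ne_zero hUP.ne.symm hVP.ne.symm
  refine ⟨N, hUN, hVN, fun hNP => hP (by rw [hNP] at hN; linarith), fun W hW => ?_⟩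
  refine eq_or_mem_farSide_of_side_pos hUV hUN hVN ?_
  have : side U V W * side U V P < 0 := hW
  rw [hN]; linarith

lemma norm_le_of_edge {κ : ℂ} {φ : QHat → ℂ} (hφ : IsFricke κ φ) {X Y Z Z' : QHat}
    (hT : FareyTriangle X Y Z) (hT' : FareyTriangle X Y Z') (hZZ' : Z ≠ Z')
    (hX : 2 ≤ ‖φ X‖) (hY : 2 ≤ ‖φ Y‖) (hZ : ‖φ Z'‖ ≤ ‖φ Z‖) :
    ‖φ X‖ ≤ ‖φ Z‖ ∧ ‖φ Y‖ ≤ ‖φ Z‖ := by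
  have hXY : ‖φ X‖ * ‖φ Y‖ ≤ 2 * ‖φ Z‖ :=
    calc ‖φ X‖ * ‖φ Y‖ = ‖φ Z + φ Z'‖ := by rw [hφ.2 X Y Z Z' hT hT' hZZ', norm_mul]
      _ ≤ 2 * ‖φ Z‖ := by linarith [norm_add_le (φ Z) (φ Z')]
  constructor <;> nlinarith

lemma max_add_le_mul_sub_max {μ u v : ℝ} (hμ : 2 ≤ μ) (hu : μ ≤ u) (hv : μ ≤ v) :
    max u v + μ * (μ - 2) ≤ u * v - max u v := by
  rcases le_total u v with h | h
  · rw [max_eq_right h]; nlinarith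
  · rw [max_eq_left h]; nlinarith

structure GrowsAway (φ : QHat → ℂ) (μ : ℝ) (U V P : QHat) : Prop where
  nbr : FareyNbr U V
  nbr_left : FareyNbr U P
  nbr_right : FareyNbr V P
  le_left : μ ≤ ‖φ U‖
  le_right : μ ≤ ‖φ V‖
  le_max : ‖φ P‖ ≤ max ‖φ U‖ ‖φ V‖

namespace GrowsAway

variable {κ : ℂ} {φ : QHat → ℂ} {μ : ℝ} {U V P : QHat}

lemma exists_step (hφ : IsFricke κ φ) (hμ : 2 ≤ μ) (h : GrowsAway φ μ U V P) :
    ∃ N, max ‖φ U‖ ‖φ V‖ + μ * (μ - 2) ≤ ‖φ N‖ ∧ GrowsAway φ μ U N V ∧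
      GrowsAway φ μ N V U ∧ ∀ W ∈ farSide U V P, W = N ∨
        (W ∈ farSide U N V ∧ (det W N).natAbs < (det W V).natAbs) ∨
        (W ∈ farSide N V U ∧ (det W N).natAbs < (det W U).natAbs) := by
  obtain ⟨N, hUN, hVN, hNP, hsplit⟩ := exists_farSide_split h.nbr h.nbr_left h.nbr_right
  have hedge : φ N + φ P = φ U * φ V :=
    hφ.2 U V N P ⟨h.nbr, hVN, hUN⟩ ⟨h.nbr, h.nbr_right, h.nbr_left⟩ hNP
  have hN : max ‖φ U‖ ‖φ V‖ + μ * (μ - 2) ≤ ‖φ N‖ :=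
    calc max ‖φ U‖ ‖φ V‖ + μ * (μ - 2) ≤ ‖φ U‖ * ‖φ V‖ - max ‖φ U‖ ‖φ V‖ :=
          max_add_le_mul_sub_max hμ h.le_left h.le_right
      _ ≤ ‖φ U * φ V‖ - ‖φ P‖ := by rw [norm_mul]; linarith [h.le_max]
      _ ≤ ‖φ U * φ V - φ P‖ := norm_sub_norm_le _ _
      _ = ‖φ N‖ := by rw [← hedge, add_sub_cancel_right]
  have hmax : max ‖φ U‖ ‖φ V‖ ≤ ‖φ N‖ := by nlinarith
  have hUN_le : ‖φ U‖ ≤ ‖φ N‖ := (le_max_left _ _).trans hmax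
  have hVN_le : ‖φ V‖ ≤ ‖φ N‖ := (le_max_right _ _).trans hmax
  exact ⟨N, hN,
    ⟨hUN, h.nbr, hVN.symm, h.le_left, h.le_right.trans hVN_le, hVN_le.trans (le_max_right _ _)⟩,
    ⟨hVN.symm, hUN.symm, h.nbr.symm, h.le_left.trans hUN_le, h.le_right,
      hUN_le.trans (le_max_left _ _)⟩, hsplit⟩

lemma max_lt_norm (hφ : IsFricke κ φ) (hμ : 2 < μ) (h : GrowsAway φ μ U V P) {W : QHat}
    (hW : W ∈ farSide U V P) : max ‖φ U‖ ‖φ V‖ < ‖φ W‖ := by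
  induction hn : (det W U).natAbs + (det W V).natAbs using Nat.strong_induction_on
    generalizing U V P with
  | _ n ih =>
    obtain ⟨N, hN, hUN, hNV, hsplit⟩ := h.exists_step hφ hμ.le
    have hNgt : max ‖φ U‖ ‖φ V‖ < ‖φ N‖ :=
      (lt_add_of_pos_right _ (mul_pos (by linarith) (by linarith))).trans_le hN
    rcases hsplit W hW with rfl | ⟨hW', hlt⟩ | ⟨hW', hlt⟩
    · exact hNgt
    · exact (hNgt.trans_le (le_max_right _ _)).trans (ih _ (by omega) hUN hW' rfl)
    · exact (hNgt.trans_le (le_max_left _ _)).trans (ih _ (by omega) hNV hW' rfl)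

lemma finite_farSide_norm_le (hφ : IsFricke κ φ) (hμ : 2 < μ) (h : GrowsAway φ μ U V P)
    (K : ℝ) : {W ∈ farSide U V P | ‖φ W‖ ≤ K}.Finite := by
  have hδ : 0 < μ * (μ - 2) := mul_pos (by linarith) (by linarith)
  obtain ⟨n, hn⟩ : ∃ n : ℕ, K ≤ max ‖φ U‖ ‖φ V‖ + n * (μ * (μ - 2)) := by
    obtain ⟨n, hn⟩ := exists_nat_ge ((K - max ‖φ U‖ ‖φ V‖) / (μ * (μ - 2)))
    exact ⟨n, by rw [div_le_iff₀ hδ] at hn; linarith⟩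
  induction n generalizing U V P K with
  | zero =>
    refine Set.finite_empty.subset fun W ⟨hW, hWK⟩ => ?_
    have := h.max_lt_norm hφ hμ hW
    push_cast at hn
    linarith
  | succ n ih =>
    obtain ⟨N, hN, hUN, hNV, hsplit⟩ := h.exists_step hφ hμ.le
    push_cast at hn
    refine (((ih hUN K ?_).union (ih hNV K ?_)).insert N).subset fun W ⟨hW, hWK⟩ => ?_
    · linarith [le_max_right ‖φ U‖ ‖φ N‖]
    · linarith [le_max_left ‖φ N‖ ‖φ V‖]
    · rcases hsplit W hW with rfl | ⟨hW', -⟩ | ⟨hW', -⟩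
      · exact Set.mem_insert _ _
      · exact Or.inr (Or.inl ⟨hW', hWK⟩)
      · exact Or.inr (Or.inr ⟨hW', hWK⟩)

variable {M : QHat}

lemma le_norm_of_side_pos (hφ : IsFricke κ φ) (hμ : 2 < μ) (h₁ : GrowsAway φ μ U M V)
    (h₂ : GrowsAway φ μ M V U) {W : QHat} (hW : 0 < side U V W * side U V M) :
    μ ≤ ‖φ W‖ := by
  rcases eq_or_mem_farSide_of_side_pos h₁.nbr_left h₁.nbr h₂.nbr.symm hW with
    rfl | ⟨hW, -⟩ | ⟨hW, -⟩
  · exact h₂.le_left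
  · exact h₁.le_left.trans ((le_max_left _ _).trans (h₁.max_lt_norm hφ hμ hW).le)
  · exact h₂.le_right.trans ((le_max_right _ _).trans (h₂.max_lt_norm hφ hμ hW).le)

lemma finite_side_pos_norm_le (hφ : IsFricke κ φ) (hμ : 2 < μ) (h₁ : GrowsAway φ μ U M V)
    (h₂ : GrowsAway φ μ M V U) (K : ℝ) :
    {W | 0 < side U V W * side U V M ∧ ‖φ W‖ ≤ K}.Finite := by
  refine (((h₁.finite_farSide_norm_le hφ hμ K).union
    (h₂.finite_farSide_norm_le hφ hμ K)).insert M).subset fun W ⟨hW, hWK⟩ => ?_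
  rcases eq_or_mem_farSide_of_side_pos h₁.nbr_left h₁.nbr h₂.nbr.symm hW with
    rfl | ⟨hW, -⟩ | ⟨hW, -⟩
  · exact Set.mem_insert _ _
  · exact Or.inr (Or.inl ⟨hW, hWK⟩)
  · exact Or.inr (Or.inr ⟨hW, hWK⟩)

end GrowsAway

lemma toRHat_injective : Function.Injective toRHat :=
  Option.map_injective Rat.cast_injective

@[simp] lemma toRHat_infty : toRHat ∞ = ∞ := rfl

@[simp] lemma toRHat_coe (q : ℚ) : toRHat q = ((q : ℝ) : RHat) := rfl

/-- For `t = r/1` this is `det t X * det t Y / (1 + r²)`; the normalisation makes it continuous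
at `∞ = 1/0`, where it is `det ∞ X * det ∞ Y`. -/
def realSide (X Y : QHat) (t : RHat) : ℝ :=
  t.elim (qden X * qden Y) fun r => (r * qden X - qnum X) * (r * qden Y - qnum Y) / (1 + r ^ 2)

lemma continuous_realSide (X Y : QHat) : Continuous (realSide X Y) := by
  rw [OnePoint.continuous_iff]
  refine ⟨?_, Continuous.div (by fun_prop) (by fun_prop) fun r => by positivity⟩
  -- near `∞`, `realSide X Y r = g r⁻¹`
  set g : ℝ → ℝ := fun u => (qden X - u * qnum X) * (qden Y - u * qnum Y) / (1 + u ^ 2)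
  have hg : Continuous g := Continuous.div (by fun_prop) (by fun_prop) fun u => by positivity
  have hlim : Tendsto (g ∘ Inv.inv) (Bornology.cobounded ℝ) (𝓝 (g 0)) :=
    hg.continuousAt.tendsto.comp tendsto_inv₀_cobounded
  rw [Filter.coclosedCompact_eq_cocompact, ← Metric.cobounded_eq_cocompact]
  convert hlim.congr' ?_ using 2
  · simp [g, realSide]
  · filter_upwards [Bornology.eventually_ne_cobounded 0] with r hr
    simp only [realSide, OnePoint.elim_some, g, Function.comp]
    field_simp
    ring

lemma exists_realSide_toRHat (X Y W : QHat) :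
    ∃ c : ℝ, 0 < c ∧ realSide X Y (toRHat W) = c * side X Y W := by
  induction W using OnePoint.rec with
  | infty => exact ⟨1, one_pos, by simp [realSide, side, det]⟩
  | coe w =>
    have hd : (0 : ℝ) < w.den := by exact_mod_cast w.pos
    refine ⟨1 / ((w.den : ℝ) ^ 2 * (1 + (w : ℝ) ^ 2)), by positivity, ?_⟩
    simp only [realSide, toRHat_coe, OnePoint.elim_some, side, det, qnum_coe, qden_coe]
    rw [Rat.cast_def]
    push_cast
    field_simp

lemma qden_ne_zero {X : QHat} (h : ∞ ≠ toRHat X) : qden X ≠ 0 := by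
  induction X using OnePoint.rec with
  | infty => exact absurd rfl h
  | coe x => simp

lemma mul_qden_sub_qnum_ne_zero {X : QHat} {r : ℝ} (h : (r : RHat) ≠ toRHat X) :
    r * qden X - qnum X ≠ 0 := by
  induction X using OnePoint.rec with
  | infty => simp
  | coe x =>
    intro h0
    refine h (congrArg _ (?_ : r = x))
    push_cast [qnum_coe, qden_coe] at h0
    rw [Rat.cast_def, eq_div_iff (by simp)]
    linarith

lemma realSide_ne_zero {X Y : QHat} {t : RHat} (hX : t ≠ toRHat X) (hY : t ≠ toRHat Y) :
    realSide X Y t ≠ 0 := by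
  induction t using OnePoint.rec with
  | infty => simpa [realSide] using ⟨qden_ne_zero hX, qden_ne_zero hY⟩
  | coe r =>
    simp only [realSide, OnePoint.elim_some]
    have := mul_qden_sub_qnum_ne_zero hX
    have := mul_qden_sub_qnum_ne_zero hY
    positivity

section Arc

variable {X Y Z : QHat}

lemma connectedComponentIn_subset_realSide_pos (hZX : Z ≠ X) (hZY : Z ≠ Y) :
    connectedComponentIn ({toRHat X, toRHat Y}ᶜ) (toRHat Z) ⊆
      {t | 0 < side X Y Z * realSide X Y t} := by
  have hZ : toRHat Z ∈ ({toRHat X, toRHat Y}ᶜ : Set RHat) := by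
    simp [toRHat_injective.ne hZX, toRHat_injective.ne hZY]
  have hσ : side X Y Z ≠ 0 := side_ne_zero hZX hZY
  have hgZ : 0 < side X Y Z * realSide X Y (toRHat Z) := by
    obtain ⟨c, hc, hcZ⟩ := exists_realSide_toRHat X Y Z
    rw [hcZ, mul_left_comm]
    have : (0 : ℝ) < side X Y Z * side X Y Z := by exact_mod_cast mul_self_pos.mpr hσ
    positivity
  intro t ht
  by_contra hneg
  obtain ⟨s, hs, hs0⟩ := isPreconnected_connectedComponentIn.intermediate_value ht
    (mem_connectedComponentIn hZ) (continuous_const.mul (continuous_realSide X Y)).continuousOn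
    ⟨not_lt.mp hneg, hgZ.le⟩
  have hsXY : s ∉ ({toRHat X, toRHat Y} : Set RHat) := connectedComponentIn_subset _ _ hs
  simp only [Set.mem_insert_iff, Set.mem_singleton_iff, not_or] at hsXY
  exact mul_ne_zero (Int.cast_ne_zero.mpr hσ) (realSide_ne_zero hsXY.1 hsXY.2) hs0

lemma eq_or_side_pos_of_mem_closure (hZX : Z ≠ X) (hZY : Z ≠ Y) {W : QHat}
    (hW : toRHat W ∈ closure (connectedComponentIn ({toRHat X, toRHat Y}ᶜ) (toRHat Z))) :
    W = X ∨ W = Y ∨ 0 < side X Y W * side X Y Z := by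
  have hclosed : IsClosed {t | 0 ≤ side X Y Z * realSide X Y t} :=
    isClosed_le continuous_const (continuous_const.mul (continuous_realSide X Y))
  have hsub : connectedComponentIn ({toRHat X, toRHat Y}ᶜ) (toRHat Z) ⊆
      {t | 0 ≤ side X Y Z * realSide X Y t} :=
    fun t ht => show (0 : ℝ) ≤ _ from (connectedComponentIn_subset_realSide_pos hZX hZY ht).le
  have hcl : 0 ≤ side X Y Z * realSide X Y (toRHat W) := closure_minimal hsub hclosed hW
  by_cases hWX : W = X
  · exact Or.inl hWX
  by_cases hWY : W = Y
  · exact Or.inr (Or.inl hWY)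
  obtain ⟨c, hc, hcW⟩ := exists_realSide_toRHat X Y W
  rw [hcW, mul_left_comm, mul_nonneg_iff_of_pos_left hc] at hcl
  refine Or.inr (Or.inr (lt_of_le_of_ne ?_ ?_))
  · rw [mul_comm]; exact_mod_cast hcl
  · exact (mul_ne_zero (side_ne_zero hWX hWY) (side_ne_zero hZX hZY)).symm

lemma eventually_side_pos (hZX : Z ≠ X) (hZY : Z ≠ Y) {lam : RHat}
    (hlam : lam ∈ connectedComponentIn ({toRHat X, toRHat Y}ᶜ) (toRHat Z)) :
    ∀ᶠ t in 𝓝 lam, ∀ W : QHat, toRHat W = t → 0 < side X Y W * side X Y Z := by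
  have hopen : IsOpen {t | 0 < side X Y Z * realSide X Y t} :=
    isOpen_lt continuous_const (continuous_const.mul (continuous_realSide X Y))
  filter_upwards [hopen.mem_nhds (connectedComponentIn_subset_realSide_pos hZX hZY hlam)]
    with t ht W hWt
  obtain ⟨c, hc, hcW⟩ := exists_realSide_toRHat X Y W
  rw [← hWt, hcW, mul_left_comm, mul_pos_iff_of_pos_left hc] at ht
  rw [mul_comm]; exact_mod_cast ht

end Arc

lemma not_isEndInv_of_finite {φ : QHat → ℂ} {lam : RHat} {S : Set QHat}
    (hS : ∀ᶠ t in 𝓝 lam, ∀ W : QHat, toRHat W = t → W ∈ S)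
    (hfin : ∀ K : ℝ, {W ∈ S | ‖φ W‖ ≤ K}.Finite) : ¬ IsEndInv φ lam := by
  rintro ⟨K, -, s, hinj, hlim, hbound⟩
  have hin : ∀ᶠ n in atTop, s n ∈ S := (hlim.eventually hS).mono fun n hn => hn (s n) rfl
  have hout : ∀ᶠ n in atTop, s n ∉ {W ∈ S | ‖φ W‖ ≤ K} := by
    rw [← Nat.cofinite_eq_atTop]; exact hinj.tendsto_cofinite (hfin K).compl_mem_cofinite
  obtain ⟨n, hnS, hn⟩ := (hin.and hout).exists
  exact hn ⟨hnS, hbound n⟩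

theorem tail_of_edge_general (κ : ℂ) (φ : QHat → ℂ) (hφ : IsFricke κ φ)
    (X Y Z Z' : QHat) (hT : FareyTriangle X Y Z) (hT' : FareyTriangle X Y Z')
    (hZZ' : Z ≠ Z') (A : Set RHat)
    (hA : A = connectedComponentIn (({toRHat X, toRHat Y} : Set RHat)ᶜ) (toRHat Z))
    (hX : 2 < ‖φ X‖) (hY : 2 < ‖φ Y‖)
    (hZ : ‖φ Z'‖ ≤ ‖φ Z‖) :
    (∀ W : QHat, toRHat W ∈ closure A →
      min (‖φ X‖) (‖φ Y‖) ≤ ‖φ W‖) ∧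
    endInvs φ ∩ A = ∅ := by
  obtain ⟨hXZ_le, hYZ_le⟩ := norm_le_of_edge hφ hT hT' hZZ' hX.le hY.le hZ
  obtain ⟨hXY, hYZ, hXZ⟩ := hT
  set μ := min ‖φ X‖ ‖φ Y‖
  have hμ : 2 < μ := lt_min hX hY
  have h₁ : GrowsAway φ μ X Z Y := ⟨hXZ, hXY, hYZ.symm, min_le_left _ _,
    (min_le_right _ _).trans hYZ_le, hYZ_le.trans (le_max_right _ _)⟩
  have h₂ : GrowsAway φ μ Z Y X := ⟨hYZ.symm, hXZ.symm, hXY.symm,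
    (min_le_left _ _).trans hXZ_le, min_le_right _ _, hXZ_le.trans (le_max_left _ _)⟩
  subst hA
  refine ⟨fun W hW => ?_, Set.eq_empty_of_forall_notMem fun lam ⟨hlam, hlamA⟩ => ?_⟩
  · rcases eq_or_side_pos_of_mem_closure hXZ.ne.symm hYZ.ne.symm hW with rfl | rfl | hW
    · exact min_le_left _ _
    · exact min_le_right _ _
    · exact h₁.le_norm_of_side_pos hφ hμ h₂ hW
  · exact not_isEndInv_of_finite (eventually_side_pos hXZ.ne.symm hYZ.ne.symm hlamA)
      (h₁.finite_side_pos_norm_le hφ hμ h₂) hlam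

/-- Let `(X,Y)` be a Farey edge with opposite vertices `Z, Z'`,
`Z` in the open arc `A` of `ℝ̂ ∖ {X,Y}` and `Z'` in the other arc. If `|φ(X)| > 2`,
`|φ(Y)| > 2` and `|φ(Z)| ≥ |φ(Z')|`, then `|φ(W)| ≥ min(|φ(X)|, |φ(Y)|)` for every
`W ∈ ℚ̂` in the closure of `A`, and `ℰ(φ) ∩ A = ∅`. -/
theorem tail_of_edge (κ : ℂ) (hκ : κ ≠ 2) (φ : QHat → ℂ) (hφ : IsFricke κ φ)
    (X Y Z Z' : QHat) (hT : FareyTriangle X Y Z) (hT' : FareyTriangle X Y Z')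
    (hZZ' : Z ≠ Z') (A : Set RHat)
    (hA : A = connectedComponentIn (({toRHat X, toRHat Y} : Set RHat)ᶜ) (toRHat Z))
    (hZ'A : toRHat Z' ∉ A)
    (hX : 2 < ‖φ X‖) (hY : 2 < ‖φ Y‖)
    (hZ : ‖φ Z'‖ ≤ ‖φ Z‖) :
    (∀ W : QHat, toRHat W ∈ closure A →
      min (‖φ X‖) (‖φ Y‖) ≤ ‖φ W‖) ∧
    endInvs φ ∩ A = ∅ :=
  tail_of_edge_general κ φ hφ X Y Z Z' hT hT' hZZ' A hA hX hY hZ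

end TWZ
end
end
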